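/- Dobrushin-type stability estimate for the linear partially kinetic system: for i ∈ {1,2}, let (r_i(t), μ_i(t)) ∈ ℝ^{n_r} × P¹(ℝ^{n_q}) solve m_eff r̈_i = −γ_r r_i + N_real G_r^T γ_q ∫ q dμ_i(t), where m_eff = M_r + N_real G_r^T M_q G_r (invertible), and μ_i(t) = (Q_i(t,·))_*μ_i^{in} with Q_i(t,q) = −G_r(r_i(t) − r_i^{in}) + q, with initial data r_i(0)=r_i^{in}, ṙ_i(0)=s_i^{in}, μ_i(0)=μ_i^{in}. Then there exist constants C, L > 0 independent of the initial data such that for all t ≥ 0: ‖r₁(t) − r₂(t)‖ + ‖ṙ₁(t) − ṙ₂(t)‖ + W₁(μ₁(t), μ₂(t)) ≤ C e^{Lt} ( ‖r₁^{in} − r₂^{in}‖ + ‖s₁^{in} − s₂^{in}‖ + W₁(μ₁^{in}, μ₂^{in}) ). -/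

import Mathlib

open MeasureTheory
open scoped RealInnerProductSpace

/-- Monge–Kantorovich (Wasserstein-1) distance via Kantorovich–Rubinstein duality. -/
noncomputable def W1 {n : ℕ} (μ ν : Measure (EuclideanSpace ℝ (Fin n))) : ℝ :=
  ⨆ φ : {φ : EuclideanSpace ℝ (Fin n) → ℝ // LipschitzWith 1 φ},
    |(∫ q, φ.1 q ∂μ) - ∫ q, φ.1 q ∂ν|

/-!
The measure `μ(t)` is the translate of `μ^in` by `-G_r (r(t) - r^in)`. Translating two measures
changes their `W₁` distance by at most the distance between the shifts, and testing against
`q ↦ ⟪u, q⟫` with `‖u‖ ≤ 1` shows that `W₁` dominates the distance between first moments. Hence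
the first moments at time `t` differ by at most `‖G_r‖ (‖Δr(t)‖ + ‖Δr(0)‖) + W₁(μ₁^in, μ₂^in)`.
Since `m_eff` is positive definite it is invertible, so `‖Δr̈‖ ≤ K ‖Δr‖ + b` with `b` linear in the
initial data, and Grönwall's inequality for `(Δr, Δṙ)` gives the exponential bound.
-/

open Set

section Lipschitz

variable {E : Type*} [NormedAddCommGroup E] {K : NNReal} {φ : E → ℝ}

instance {α β : Type*} [PseudoEMetricSpace α] [PseudoEMetricSpace β] [Inhabited β] :
    Nonempty {f : α → β // LipschitzWith K f} :=
  ⟨⟨fun _ => default, LipschitzWith.const' _⟩⟩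

theorem LipschitzWith.comp_add_left (hφ : LipschitzWith K φ) (a : E) :
    LipschitzWith K fun q => φ (a + q) := by
  simpa [Function.comp_def] using hφ.comp (isometry_add_left a).lipschitz

variable [MeasurableSpace E] [OpensMeasurableSpace E] {μ : Measure E}

theorem LipschitzWith.integrable_of_integrable_id [IsFiniteMeasure μ]
    (hμ : Integrable (fun q => q) μ) (hφ : LipschitzWith K φ) : Integrable φ μ := by
  refine ((integrable_const ‖φ 0‖).add (hμ.norm.const_mul K)).mono'
    hφ.continuous.aestronglyMeasurable (ae_of_all _ fun q => ?_)
  have h := hφ.norm_sub_le q 0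
  rw [sub_zero] at h
  show ‖φ q‖ ≤ ‖φ 0‖ + K * ‖q‖
  linarith [norm_le_norm_add_norm_sub' (φ q) (φ 0)]

variable [IsProbabilityMeasure μ]

theorem LipschitzWith.abs_integral_sub_apply_zero_le (hμ : Integrable (fun q => q) μ)
    (hφ : LipschitzWith K φ) : |∫ q, φ q ∂μ - φ 0| ≤ K * ∫ q, ‖q‖ ∂μ := by
  have hφμ := hφ.integrable_of_integrable_id hμ
  calc |∫ q, φ q ∂μ - φ 0| = ‖∫ q, (φ q - φ 0) ∂μ‖ := by
        rw [integral_sub hφμ (integrable_const _), integral_const]; simp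
    _ ≤ ∫ q, K * ‖q‖ ∂μ := norm_integral_le_of_norm_le (hμ.norm.const_mul K)
        (ae_of_all _ fun q => by simpa using hφ.norm_sub_le q 0)
    _ = K * ∫ q, ‖q‖ ∂μ := integral_const_mul _ _

theorem LipschitzWith.abs_integral_comp_add_sub_le (hμ : Integrable (fun q => q) μ)
    (hφ : LipschitzWith K φ) (a b : E) :
    |∫ q, φ (a + q) ∂μ - ∫ q, φ (b + q) ∂μ| ≤ K * ‖a - b‖ := by
  rw [← integral_sub ((hφ.comp_add_left a).integrable_of_integrable_id hμ)
    ((hφ.comp_add_left b).integrable_of_integrable_id hμ), ← Real.norm_eq_abs]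
  calc _ ≤ K * ‖a - b‖ * μ.real univ := norm_integral_le_of_norm_le_const
        (ae_of_all _ fun q => by simpa using hφ.norm_sub_le (a + q) (b + q))
    _ = K * ‖a - b‖ := by simp

end Lipschitz

theorem integrable_id_map_add_left {E : Type*} [NormedAddCommGroup E] [MeasurableSpace E]
    [BorelSpace E] [SecondCountableTopology E] {μ : Measure E} [IsFiniteMeasure μ]
    (hμ : Integrable (fun q => q) μ) (a : E) : Integrable (fun q => q) (μ.map (a + ·)) :=
  (integrable_map_measure aestronglyMeasurable_id (by fun_prop)).2 ((integrable_const a).add hμ)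

section W1

variable {n : ℕ} {μ ν : Measure (EuclideanSpace ℝ (Fin n))}

theorem W1_le {c : ℝ}
    (h : ∀ φ, LipschitzWith 1 φ → |∫ q, φ q ∂μ - ∫ q, φ q ∂ν| ≤ c) : W1 μ ν ≤ c :=
  ciSup_le fun φ => h φ.1 φ.2

variable [IsProbabilityMeasure μ] [IsProbabilityMeasure ν]

theorem bddAbove_W1 (hμ : Integrable (fun q => q) μ) (hν : Integrable (fun q => q) ν) :
    BddAbove (range fun φ : {φ : EuclideanSpace ℝ (Fin n) → ℝ // LipschitzWith 1 φ} =>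
      |∫ q, φ.1 q ∂μ - ∫ q, φ.1 q ∂ν|) := by
  refine ⟨(∫ q, ‖q‖ ∂μ) + ∫ q, ‖q‖ ∂ν, ?_⟩
  rintro _ ⟨⟨φ, hφ⟩, rfl⟩
  have hμφ := hφ.abs_integral_sub_apply_zero_le hμ
  have hνφ := hφ.abs_integral_sub_apply_zero_le hν
  rw [NNReal.coe_one, one_mul] at hμφ hνφ
  calc _ ≤ |∫ q, φ q ∂μ - φ 0| + |φ 0 - ∫ q, φ q ∂ν| := abs_sub_le _ _ _
    _ ≤ _ := by rw [abs_sub_comm (φ 0)]; exact add_le_add hμφ hνφ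

theorem abs_integral_sub_le_W1 (hμ : Integrable (fun q => q) μ) (hν : Integrable (fun q => q) ν)
    {φ : EuclideanSpace ℝ (Fin n) → ℝ} (hφ : LipschitzWith 1 φ) :
    |∫ q, φ q ∂μ - ∫ q, φ q ∂ν| ≤ W1 μ ν :=
  le_ciSup (bddAbove_W1 hμ hν) (⟨φ, hφ⟩ : {φ : EuclideanSpace ℝ (Fin n) → ℝ // LipschitzWith 1 φ})

theorem W1_nonneg (hμ : Integrable (fun q => q) μ) (hν : Integrable (fun q => q) ν) :
    0 ≤ W1 μ ν :=
  (abs_nonneg _).trans (abs_integral_sub_le_W1 hμ hν (LipschitzWith.const' 0))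

theorem norm_integral_id_sub_le_W1 (hμ : Integrable (fun q => q) μ)
    (hν : Integrable (fun q => q) ν) : ‖∫ q, q ∂μ - ∫ q, q ∂ν‖ ≤ W1 μ ν := by
  set v := ∫ q, q ∂μ - ∫ q, q ∂ν
  set u := ‖v‖⁻¹ • v
  have hu : ‖innerSL ℝ u‖₊ ≤ 1 := by
    rw [← NNReal.coe_le_coe, coe_nnnorm, innerSL_apply_norm, norm_smul, norm_inv, norm_norm]
    exact inv_mul_le_one_of_le₀ le_rfl (norm_nonneg v)
  calc ‖v‖ = ⟪u, v⟫ := by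
        rw [real_inner_smul_left, real_inner_self_eq_norm_sq, sq, ← mul_assoc, inv_mul_mul_self]
    _ = ∫ q, ⟪u, q⟫ ∂μ - ∫ q, ⟪u, q⟫ ∂ν := by
        rw [inner_sub_right, integral_inner hμ, integral_inner hν]
    _ ≤ W1 μ ν := (le_abs_self _).trans
        (abs_integral_sub_le_W1 hμ hν ((innerSL ℝ u).lipschitz.weaken hu))

theorem W1_map_add_le (hμ : Integrable (fun q => q) μ) (hν : Integrable (fun q => q) ν)
    (a b : EuclideanSpace ℝ (Fin n)) :
    W1 (μ.map (a + ·)) (ν.map (b + ·)) ≤ ‖a - b‖ + W1 μ ν := by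
  refine W1_le fun φ hφ => ?_
  rw [integral_map (by fun_prop) hφ.continuous.aestronglyMeasurable,
    integral_map (by fun_prop) hφ.continuous.aestronglyMeasurable]
  calc _ ≤ |∫ q, φ (a + q) ∂μ - ∫ q, φ (b + q) ∂μ| + |∫ q, φ (b + q) ∂μ - ∫ q, φ (b + q) ∂ν| :=
        abs_sub_le _ _ _
    _ ≤ ‖a - b‖ + W1 μ ν := add_le_add
        (by simpa using hφ.abs_integral_comp_add_sub_le hμ a b)
        (abs_integral_sub_le_W1 hμ hν (hφ.comp_add_left b))

end W1

section Gronwall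

variable {E : Type*} [NormedAddCommGroup E] [NormedSpace ℝ E]

theorem gronwallBound_le_mul_exp {δ K b t : ℝ} (hK : 1 ≤ K) (hb : 0 ≤ b) (ht : 0 ≤ t) :
    gronwallBound δ K b t ≤ (δ + b) * Real.exp (K * t) := by
  rw [gronwallBound_of_K_ne_0 (by positivity)]
  have hbK : b / K ≤ b := div_le_self hb hK
  have hexp : 1 ≤ Real.exp (K * t) := Real.one_le_exp (by positivity)
  nlinarith

theorem max_norm_le_of_norm_second_deriv_le {x v a : ℝ → E} {K b t : ℝ}
    (hx : ∀ u, HasDerivAt x (v u) u) (hv : ∀ u, HasDerivAt v (a u) u)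
    (hK : 0 ≤ K) (hb : 0 ≤ b) (ht : 0 ≤ t) (bound : ∀ u ∈ Ico 0 t, ‖a u‖ ≤ K * ‖x u‖ + b) :
    max ‖x t‖ ‖v t‖ ≤ (max ‖x 0‖ ‖v 0‖ + b) * Real.exp ((K + 1) * t) := by
  have hf : ∀ u, HasDerivAt (fun u => (x u, v u)) (v u, a u) u :=
    fun u => (hx u).prodMk (hv u)
  have hcont : Continuous fun u => (x u, v u) :=
    continuous_iff_continuousAt.2 fun u => (hf u).continuousAt
  refine (norm_le_gronwallBound_of_norm_deriv_right_le (K := K + 1) (ε := b) hcont.continuousOn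
    (fun u _ => (hf u).hasDerivWithinAt) le_rfl (fun u hu => ?_) t ⟨ht, le_rfl⟩).trans ?_
  · rw [Prod.norm_mk, Prod.norm_mk]
    have hxu : ‖x u‖ ≤ max ‖x u‖ ‖v u‖ := le_max_left _ _
    have hvu : ‖v u‖ ≤ max ‖x u‖ ‖v u‖ := le_max_right _ _
    refine max_le ?_ ((bound u hu).trans ?_) <;> nlinarith [norm_nonneg (x u)]
  · simpa using gronwallBound_le_mul_exp (δ := max ‖x 0‖ ‖v 0‖) (by linarith) hb ht

end Gronwall

section EffectiveMass

variable {E F : Type*} [NormedAddCommGroup E] [InnerProductSpace ℝ E]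

theorem ContinuousLinearMap.exists_equiv_of_inner_pos [FiniteDimensional ℝ E] (m : E →L[ℝ] E)
    (hm : ∀ x, x ≠ 0 → 0 < ⟪x, m x⟫) : ∃ e : E ≃L[ℝ] E, (e : E →L[ℝ] E) = m := by
  have hinj : Function.Injective m := (injective_iff_map_eq_zero m).2 fun x hx => by
    by_contra h
    simpa [hx] using hm x h
  exact ⟨(LinearEquiv.ofInjectiveEndo (m : E →ₗ[ℝ] E) hinj).toContinuousLinearEquiv, rfl⟩

variable [CompleteSpace E] [NormedAddCommGroup F] [InnerProductSpace ℝ F] [CompleteSpace F]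

theorem inner_add_smul_adjoint_comp_pos (Mr : E →L[ℝ] E) (Mq : F →L[ℝ] F) (G : E →L[ℝ] F)
    {N : ℝ} (hN : 0 ≤ N) (hMr : ∀ x, x ≠ 0 → 0 < ⟪x, Mr x⟫) (hMq : ∀ y, 0 ≤ ⟪y, Mq y⟫)
    {x : E} (hx : x ≠ 0) :
    0 < ⟪x, (Mr + N • ((ContinuousLinearMap.adjoint G).comp (Mq.comp G))) x⟫ := by
  have hG : ⟪x, (ContinuousLinearMap.adjoint G) (Mq (G x))⟫ = ⟪G x, Mq (G x)⟫ :=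
    ContinuousLinearMap.adjoint_inner_right G x _
  simp only [add_apply, smul_apply, ContinuousLinearMap.comp_apply, inner_add_right,
    inner_smul_right, hG]
  exact add_pos_of_pos_of_nonneg (hMr x hx) (mul_nonneg hN (hMq _))

end EffectiveMass

section PartiallyKinetic

variable {E : Type*} [NormedAddCommGroup E] [NormedSpace ℝ E] {n : ℕ}

/-- For the paper's system, `Γ = N_real G_rᵀ γ_q` and `G = G_r`. -/
structure IsPartiallyKineticSolution (meff : E ≃L[ℝ] E) (γ : E →L[ℝ] E)
    (Γ : EuclideanSpace ℝ (Fin n) →L[ℝ] E) (G : E →L[ℝ] EuclideanSpace ℝ (Fin n))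
    (r : ℝ → E) (μ : ℝ → Measure (EuclideanSpace ℝ (Fin n))) : Prop where
  contDiff : ContDiff ℝ 2 r
  isProbabilityMeasure_zero : IsProbabilityMeasure (μ 0)
  integrable_zero : Integrable (fun q => q) (μ 0)
  ode : ∀ t, meff (deriv (deriv r) t) = -γ (r t) + Γ (∫ q, q ∂μ t)
  eq_map : ∀ t, μ t = (μ 0).map (fun q => -G (r t - r 0) + q)

namespace IsPartiallyKineticSolution

variable {meff : E ≃L[ℝ] E} {γ : E →L[ℝ] E} {Γ : EuclideanSpace ℝ (Fin n) →L[ℝ] E}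
  {G : E →L[ℝ] EuclideanSpace ℝ (Fin n)} {r r₁ r₂ : ℝ → E}
  {μ μ₁ μ₂ : ℝ → Measure (EuclideanSpace ℝ (Fin n))}

theorem hasDerivAt (h : IsPartiallyKineticSolution meff γ Γ G r μ) (t : ℝ) :
    HasDerivAt r (deriv r t) t :=
  (h.contDiff.differentiable (by norm_num) t).hasDerivAt

theorem hasDerivAt_deriv (h : IsPartiallyKineticSolution meff γ Γ G r μ) (t : ℝ) :
    HasDerivAt (deriv r) (deriv (deriv r) t) t :=
  ((show ContDiff ℝ (1 + 1) r from h.contDiff).deriv'.differentiable (by norm_num) t).hasDerivAt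

theorem isProbabilityMeasure (h : IsPartiallyKineticSolution meff γ Γ G r μ) (t : ℝ) :
    IsProbabilityMeasure (μ t) := by
  have := h.isProbabilityMeasure_zero
  rw [h.eq_map t]
  exact Measure.isProbabilityMeasure_map (by fun_prop)

theorem integrable (h : IsPartiallyKineticSolution meff γ Γ G r μ) (t : ℝ) :
    Integrable (fun q => q) (μ t) := by
  have := h.isProbabilityMeasure_zero
  rw [h.eq_map t]
  exact integrable_id_map_add_left h.integrable_zero _

theorem W1_le (h₁ : IsPartiallyKineticSolution meff γ Γ G r₁ μ₁)
    (h₂ : IsPartiallyKineticSolution meff γ Γ G r₂ μ₂) (t : ℝ) :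
    W1 (μ₁ t) (μ₂ t) ≤ ‖G‖ * (‖r₁ t - r₂ t‖ + ‖r₁ 0 - r₂ 0‖) + W1 (μ₁ 0) (μ₂ 0) := by
  have := h₁.isProbabilityMeasure_zero
  have := h₂.isProbabilityMeasure_zero
  rw [h₁.eq_map t, h₂.eq_map t]
  refine (W1_map_add_le h₁.integrable_zero h₂.integrable_zero _ _).trans (add_le_add ?_ le_rfl)
  have hshift : -G (r₁ t - r₁ 0) - -G (r₂ t - r₂ 0) = -G ((r₁ t - r₂ t) - (r₁ 0 - r₂ 0)) := by
    simp only [map_sub]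
    abel
  rw [hshift, norm_neg]
  exact (G.le_opNorm _).trans (mul_le_mul_of_nonneg_left (norm_sub_le _ _) (norm_nonneg _))

theorem norm_integral_id_sub_le (h₁ : IsPartiallyKineticSolution meff γ Γ G r₁ μ₁)
    (h₂ : IsPartiallyKineticSolution meff γ Γ G r₂ μ₂) (t : ℝ) :
    ‖∫ q, q ∂μ₁ t - ∫ q, q ∂μ₂ t‖ ≤ ‖G‖ * (‖r₁ t - r₂ t‖ + ‖r₁ 0 - r₂ 0‖) + W1 (μ₁ 0) (μ₂ 0) := by
  have := h₁.isProbabilityMeasure t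
  have := h₂.isProbabilityMeasure t
  exact (norm_integral_id_sub_le_W1 (h₁.integrable t) (h₂.integrable t)).trans (h₁.W1_le h₂ t)

theorem norm_deriv_deriv_sub_le (h₁ : IsPartiallyKineticSolution meff γ Γ G r₁ μ₁)
    (h₂ : IsPartiallyKineticSolution meff γ Γ G r₂ μ₂) (t : ℝ) :
    ‖deriv (deriv r₁) t - deriv (deriv r₂) t‖ ≤
      ‖(meff.symm : E →L[ℝ] E)‖ * (‖γ‖ + ‖Γ‖ * ‖G‖) * ‖r₁ t - r₂ t‖ +
        ‖(meff.symm : E →L[ℝ] E)‖ * ‖Γ‖ * (‖G‖ * ‖r₁ 0 - r₂ 0‖ + W1 (μ₁ 0) (μ₂ 0)) := by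
  have hsymm : deriv (deriv r₁) t - deriv (deriv r₂) t
      = meff.symm (-γ (r₁ t - r₂ t) + Γ (∫ q, q ∂μ₁ t - ∫ q, q ∂μ₂ t)) := by
    rw [meff.eq_symm_apply, map_sub, h₁.ode, h₂.ode, map_sub, map_sub]
    abel
  have hforce : ‖-γ (r₁ t - r₂ t) + Γ (∫ q, q ∂μ₁ t - ∫ q, q ∂μ₂ t)‖ ≤
      ‖γ‖ * ‖r₁ t - r₂ t‖ + ‖Γ‖ * (‖G‖ * (‖r₁ t - r₂ t‖ + ‖r₁ 0 - r₂ 0‖) + W1 (μ₁ 0) (μ₂ 0)) :=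
    (norm_add_le _ _).trans (add_le_add ((norm_neg _).trans_le (γ.le_opNorm _))
      ((Γ.le_opNorm _).trans (by gcongr; exact h₁.norm_integral_id_sub_le h₂ t)))
  calc _ ≤ ‖(meff.symm : E →L[ℝ] E)‖ * ‖-γ (r₁ t - r₂ t) + Γ (∫ q, q ∂μ₁ t - ∫ q, q ∂μ₂ t)‖ :=
        hsymm ▸ (meff.symm : E →L[ℝ] E).le_opNorm _
    _ ≤ ‖(meff.symm : E →L[ℝ] E)‖ * (‖γ‖ * ‖r₁ t - r₂ t‖ +
          ‖Γ‖ * (‖G‖ * (‖r₁ t - r₂ t‖ + ‖r₁ 0 - r₂ 0‖) + W1 (μ₁ 0) (μ₂ 0))) := by gcongr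
    _ = _ := by ring

theorem max_norm_sub_le (h₁ : IsPartiallyKineticSolution meff γ Γ G r₁ μ₁)
    (h₂ : IsPartiallyKineticSolution meff γ Γ G r₂ μ₂) {t : ℝ} (ht : 0 ≤ t) :
    max ‖r₁ t - r₂ t‖ ‖deriv r₁ t - deriv r₂ t‖ ≤
      (max ‖r₁ 0 - r₂ 0‖ ‖deriv r₁ 0 - deriv r₂ 0‖ +
        ‖(meff.symm : E →L[ℝ] E)‖ * ‖Γ‖ * (‖G‖ * ‖r₁ 0 - r₂ 0‖ + W1 (μ₁ 0) (μ₂ 0))) *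
        Real.exp ((‖(meff.symm : E →L[ℝ] E)‖ * (‖γ‖ + ‖Γ‖ * ‖G‖) + 1) * t) := by
  have := h₁.isProbabilityMeasure_zero
  have := h₂.isProbabilityMeasure_zero
  have hW₀ := W1_nonneg h₁.integrable_zero h₂.integrable_zero
  exact max_norm_le_of_norm_second_deriv_le (x := fun u => r₁ u - r₂ u)
    (fun u => (h₁.hasDerivAt u).sub (h₂.hasDerivAt u))
    (fun u => (h₁.hasDerivAt_deriv u).sub (h₂.hasDerivAt_deriv u)) (by positivity)
    (by positivity) ht fun u _ => h₁.norm_deriv_deriv_sub_le h₂ u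
theorem stability (h₁ : IsPartiallyKineticSolution meff γ Γ G r₁ μ₁)
    (h₂ : IsPartiallyKineticSolution meff γ Γ G r₂ μ₂) {t : ℝ} (ht : 0 ≤ t) :
    ‖r₁ t - r₂ t‖ + ‖deriv r₁ t - deriv r₂ t‖ + W1 (μ₁ t) (μ₂ t) ≤
      (2 + ‖G‖) * (2 + ‖(meff.symm : E →L[ℝ] E)‖ * ‖Γ‖ * (‖G‖ + 1)) *
        Real.exp ((‖(meff.symm : E →L[ℝ] E)‖ * (‖γ‖ + ‖Γ‖ * ‖G‖) + 1) * t) *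
        (‖r₁ 0 - r₂ 0‖ + ‖deriv r₁ 0 - deriv r₂ 0‖ + W1 (μ₁ 0) (μ₂ 0)) := by
  have hM := h₁.max_norm_sub_le h₂ ht
  have hW := h₁.W1_le h₂ t
  set s := ‖(meff.symm : E →L[ℝ] E)‖
  set growth := Real.exp ((s * (‖γ‖ + ‖Γ‖ * ‖G‖) + 1) * t)
  set W₀ := W1 (μ₁ 0) (μ₂ 0)
  set D₀ := ‖r₁ 0 - r₂ 0‖ + ‖deriv r₁ 0 - deriv r₂ 0‖ + W₀
  set M := max ‖r₁ t - r₂ t‖ ‖deriv r₁ t - deriv r₂ t‖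
  have hW₀ : 0 ≤ W₀ := by
    have := h₁.isProbabilityMeasure_zero
    have := h₂.isProbabilityMeasure_zero
    exact W1_nonneg h₁.integrable_zero h₂.integrable_zero
  have hD₀ : 0 ≤ D₀ := by positivity
  have hgrowth : 1 ≤ growth := Real.one_le_exp (by positivity)
  have hinit : ‖G‖ * ‖r₁ 0 - r₂ 0‖ + W₀ ≤ (‖G‖ + 1) * D₀ := by
    nlinarith [norm_nonneg G, norm_nonneg (r₁ 0 - r₂ 0), norm_nonneg (deriv r₁ 0 - deriv r₂ 0)]
  have hM' : M ≤ (1 + s * ‖Γ‖ * (‖G‖ + 1)) * D₀ * growth := by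
    have hmax : max ‖r₁ 0 - r₂ 0‖ ‖deriv r₁ 0 - deriv r₂ 0‖ ≤ D₀ :=
      max_le (by linarith [norm_nonneg (deriv r₁ 0 - deriv r₂ 0)])
        (by linarith [norm_nonneg (r₁ 0 - r₂ 0)])
    calc M ≤ _ := hM
      _ ≤ (D₀ + s * ‖Γ‖ * ((‖G‖ + 1) * D₀)) * growth := by gcongr
      _ = _ := by ring
  have hMt : ‖G‖ * ‖r₁ t - r₂ t‖ ≤ ‖G‖ * M := by gcongr; exact le_max_left _ _
  calc _ ≤ (2 + ‖G‖) * M + (‖G‖ * ‖r₁ 0 - r₂ 0‖ + W₀) := by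
        linarith [le_max_left ‖r₁ t - r₂ t‖ ‖deriv r₁ t - deriv r₂ t‖,
          le_max_right ‖r₁ t - r₂ t‖ ‖deriv r₁ t - deriv r₂ t‖]
    _ ≤ (2 + ‖G‖) * ((1 + s * ‖Γ‖ * (‖G‖ + 1)) * D₀ * growth) + (2 + ‖G‖) * (D₀ * growth) :=
        add_le_add (by gcongr) (hinit.trans (mul_le_mul (by linarith) (le_mul_of_one_le_right hD₀
          hgrowth) hD₀ (by positivity)))
    _ = _ := by ring

end IsPartiallyKineticSolution

end PartiallyKinetic

theorem dobrushin_stability_general {nr nq : ℕ}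
    (Mr γr : EuclideanSpace ℝ (Fin nr) →L[ℝ] EuclideanSpace ℝ (Fin nr))
    (Mq γq : EuclideanSpace ℝ (Fin nq) →L[ℝ] EuclideanSpace ℝ (Fin nq))
    (Gr : EuclideanSpace ℝ (Fin nr) →L[ℝ] EuclideanSpace ℝ (Fin nq))
    (Nreal : ℝ) (hNreal : 0 < Nreal)
    (hMr_pos : ∀ x, x ≠ 0 → 0 < ⟪x, Mr x⟫)
    (hMq_pos : ∀ x, x ≠ 0 → 0 < ⟪x, Mq x⟫) :
    ∃ C > (0 : ℝ), ∃ L > (0 : ℝ),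
      ∀ (r₁ r₂ : ℝ → EuclideanSpace ℝ (Fin nr))
        (μ₁ μ₂ : ℝ → Measure (EuclideanSpace ℝ (Fin nq))),
        ContDiff ℝ 2 r₁ → ContDiff ℝ 2 r₂ →
        (∀ t, IsProbabilityMeasure (μ₁ t)) → (∀ t, IsProbabilityMeasure (μ₂ t)) →
        Integrable (fun q => q) (μ₁ 0) → Integrable (fun q => q) (μ₂ 0) →
        (∀ t, (Mr + Nreal • ((ContinuousLinearMap.adjoint Gr).comp (Mq.comp Gr)))
            (deriv (deriv r₁) t)
            = -γr (r₁ t) + Nreal • (ContinuousLinearMap.adjoint Gr)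
                (γq (∫ q, q ∂ (μ₁ t)))) →
        (∀ t, (Mr + Nreal • ((ContinuousLinearMap.adjoint Gr).comp (Mq.comp Gr)))
            (deriv (deriv r₂) t)
            = -γr (r₂ t) + Nreal • (ContinuousLinearMap.adjoint Gr)
                (γq (∫ q, q ∂ (μ₂ t)))) →
        (∀ t, μ₁ t = Measure.map (fun q => -Gr (r₁ t - r₁ 0) + q) (μ₁ 0)) →
        (∀ t, μ₂ t = Measure.map (fun q => -Gr (r₂ t - r₂ 0) + q) (μ₂ 0)) →
        ∀ t : ℝ, 0 ≤ t →
          ‖r₁ t - r₂ t‖ + ‖deriv r₁ t - deriv r₂ t‖ + W1 (μ₁ t) (μ₂ t)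
            ≤ C * Real.exp (L * t) *
              (‖r₁ 0 - r₂ 0‖ + ‖deriv r₁ 0 - deriv r₂ 0‖ + W1 (μ₁ 0) (μ₂ 0)) := by
  have hMq_nonneg (y : EuclideanSpace ℝ (Fin nq)) : 0 ≤ ⟪y, Mq y⟫ := by
    rcases eq_or_ne y 0 with rfl | hy
    · simp
    · exact (hMq_pos y hy).le
  obtain ⟨meff, hmeff⟩ := ContinuousLinearMap.exists_equiv_of_inner_pos _ fun x hx =>
    inner_add_smul_adjoint_comp_pos Mr Mq Gr hNreal.le hMr_pos hMq_nonneg hx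
  set Γ := Nreal • ((ContinuousLinearMap.adjoint Gr).comp γq)
  set s := ‖(meff.symm : EuclideanSpace ℝ (Fin nr) →L[ℝ] EuclideanSpace ℝ (Fin nr))‖
  refine ⟨(2 + ‖Gr‖) * (2 + s * ‖Γ‖ * (‖Gr‖ + 1)), by positivity,
    s * (‖γr‖ + ‖Γ‖ * ‖Gr‖) + 1, by positivity, ?_⟩
  intro r₁ r₂ μ₁ μ₂ hr₁ hr₂ hp₁ hp₂ hi₁ hi₂ hode₁ hode₂ hmap₁ hmap₂ t ht
  have sol₁ : IsPartiallyKineticSolution meff γr Γ Gr r₁ μ₁ :=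
    ⟨hr₁, hp₁ 0, hi₁, fun t => (DFunLike.congr_fun hmeff _).trans (hode₁ t), hmap₁⟩
  have sol₂ : IsPartiallyKineticSolution meff γr Γ Gr r₂ μ₂ :=
    ⟨hr₂, hp₂ 0, hi₂, fun t => (DFunLike.congr_fun hmeff _).trans (hode₂ t), hmap₂⟩
  exact sol₁.stability sol₂ ht

/-- Dobrushin's stability estimate for linear partially kinetic systems: there are
constants `C, L > 0`, independent of the initial data, such that any two solutions of
the linear partially kinetic system satisfy the exponential stability estimate. -/
theorem dobrushin_stability {nr nq : ℕ}
    (Mr γr : EuclideanSpace ℝ (Fin nr) →L[ℝ] EuclideanSpace ℝ (Fin nr))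
    (Mq γq : EuclideanSpace ℝ (Fin nq) →L[ℝ] EuclideanSpace ℝ (Fin nq))
    (Gr : EuclideanSpace ℝ (Fin nr) →L[ℝ] EuclideanSpace ℝ (Fin nq))
    (Nreal : ℝ) (hNreal : 0 < Nreal)
    (hMr_sym : ∀ x y, ⟪Mr x, y⟫ = ⟪x, Mr y⟫)
    (hMr_pos : ∀ x, x ≠ 0 → 0 < ⟪x, Mr x⟫)
    (hMq_sym : ∀ x y, ⟪Mq x, y⟫ = ⟪x, Mq y⟫)
    (hMq_pos : ∀ x, x ≠ 0 → 0 < ⟪x, Mq x⟫) :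
    ∃ C > (0 : ℝ), ∃ L > (0 : ℝ),
      ∀ (r₁ r₂ : ℝ → EuclideanSpace ℝ (Fin nr))
        (μ₁ μ₂ : ℝ → Measure (EuclideanSpace ℝ (Fin nq))),
        ContDiff ℝ 2 r₁ → ContDiff ℝ 2 r₂ →
        (∀ t, IsProbabilityMeasure (μ₁ t)) → (∀ t, IsProbabilityMeasure (μ₂ t)) →
        Integrable (fun q => q) (μ₁ 0) → Integrable (fun q => q) (μ₂ 0) →
        (∀ t, (Mr + Nreal • ((ContinuousLinearMap.adjoint Gr).comp (Mq.comp Gr)))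
            (deriv (deriv r₁) t)
            = -γr (r₁ t) + Nreal • (ContinuousLinearMap.adjoint Gr)
                (γq (∫ q, q ∂ (μ₁ t)))) →
        (∀ t, (Mr + Nreal • ((ContinuousLinearMap.adjoint Gr).comp (Mq.comp Gr)))
            (deriv (deriv r₂) t)
            = -γr (r₂ t) + Nreal • (ContinuousLinearMap.adjoint Gr)
                (γq (∫ q, q ∂ (μ₂ t)))) →
        (∀ t, μ₁ t = Measure.map (fun q => -Gr (r₁ t - r₁ 0) + q) (μ₁ 0)) →
        (∀ t, μ₂ t = Measure.map (fun q => -Gr (r₂ t - r₂ 0) + q) (μ₂ 0)) →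
        ∀ t : ℝ, 0 ≤ t →
          ‖r₁ t - r₂ t‖ + ‖deriv r₁ t - deriv r₂ t‖ + W1 (μ₁ t) (μ₂ t)
            ≤ C * Real.exp (L * t) *
              (‖r₁ 0 - r₂ 0‖ + ‖deriv r₁ 0 - deriv r₂ 0‖ + W1 (μ₁ 0) (μ₂ 0)) :=
  dobrushin_stability_general Mr γr Mq γq Gr Nreal hNreal hMr_pos hMq_pos
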